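/- Let N ≥ 1 be a natural number, d̄ > 0 real, and Δ_min ≤ Δ_max reals with Δ_max − Δ_min ≤ 1/(N·d̄). Define the static phase shifts θ_n = −2π·n·d̄·(Δ_min + 1/(2N·d̄)) for n = 0, …, N−1. Then for every Δ ∈ [Δ_min, Δ_max], the passive beamforming gain satisfies ‖∑_{n=0}^{N−1} exp(i(θ_n + 2π n d̄ Δ))‖² ≥ 1/(sin(π/(2N)))². -/

import Mathlib

/-!
With the static phases, element `n` has total phase `n x` where `|x| ≤ π / N`. Rotating the
array sum by `exp (-i (N - 1) x / 2)` centres it, so its real part is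
`∑ₙ cos ((2n + 1 - N) x / 2)`. All these arguments stay in `[-π/2, π/2]`, so every term is
smallest at the edge `|x / 2| = π / (2N)`, where the sum telescopes to `1 / sin (π / (2N))`.
-/

open Real Finset

lemma sum_range_cos_mul_sin (N : ℕ) (t : ℝ) :
    (∑ n ∈ range N, cos ((2 * n + 1 - N) * t)) * sin t = sin (N * t) := by
  have step (n : ℕ) : sin ((2 * ((n + 1 : ℕ) : ℝ) - N) * t) - sin ((2 * n - N) * t)
      = 2 * (cos ((2 * n + 1 - N) * t) * sin t) := by
    rw [sin_sub_sin]; push_cast; ring_nf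
  have telescope := sum_range_sub (fun n : ℕ => sin ((2 * n - N) * t)) N
  simp only [step, ← mul_sum, ← sum_mul] at telescope
  have hneg : sin ((2 * ((0 : ℕ) : ℝ) - N) * t) = -sin (N * t) := by
    rw [← sin_neg]; push_cast; ring_nf
  rw [hneg, show (2 * (N : ℝ) - N) * t = N * t by ring] at telescope
  linarith

lemma cos_le_cos_of_abs_le {a b : ℝ} (hb : |b| ≤ π) (hab : |a| ≤ |b|) : cos b ≤ cos a := by
  rw [← cos_abs a, ← cos_abs b]
  exact cos_le_cos_of_nonneg_of_le_pi (abs_nonneg a) hb hab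

lemma sum_range_cos_le_sum_range_cos (N : ℕ) {t y : ℝ} (hNt : N * t ≤ π) (hy : |y| ≤ t) :
    ∑ n ∈ range N, cos ((2 * n + 1 - N) * t) ≤ ∑ n ∈ range N, cos ((2 * n + 1 - N) * y) := by
  refine sum_le_sum fun n hn => cos_le_cos_of_abs_le ?_ ?_
  · have hn : (n : ℝ) + 1 ≤ N := by exact_mod_cast mem_range.mp hn
    have hk : |2 * (n : ℝ) + 1 - N| ≤ N := abs_le.mpr ⟨by linarith, by linarith⟩
    have ht : 0 ≤ t := (abs_nonneg y).trans hy
    rw [abs_mul, abs_of_nonneg ht]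
    exact (mul_le_mul_of_nonneg_right hk ht).trans hNt
  · rw [abs_mul, abs_mul, abs_of_nonneg ((abs_nonneg y).trans hy)]
    exact mul_le_mul_of_nonneg_left hy (abs_nonneg _)

lemma sum_range_cos_le_norm_sum_range_exp (N : ℕ) (x : ℝ) :
    ∑ n ∈ range N, cos ((2 * n + 1 - N) * (x / 2)) ≤
      ‖∑ n ∈ range N, Complex.exp ((n * x : ℝ) * Complex.I)‖ := by
  set φ : ℝ := (N - 1) * x / 2
  calc ∑ n ∈ range N, cos ((2 * n + 1 - N) * (x / 2))
      = (Complex.exp ((-φ : ℝ) * Complex.I) *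
          ∑ n ∈ range N, Complex.exp ((n * x : ℝ) * Complex.I)).re := by
        simp only [mul_sum, ← Complex.exp_add, ← add_mul, ← Complex.ofReal_add,
          Complex.re_sum, Complex.exp_ofReal_mul_I_re]
        exact sum_congr rfl fun n _ => congrArg cos (by ring)
    _ ≤ ‖Complex.exp ((-φ : ℝ) * Complex.I) *
          ∑ n ∈ range N, Complex.exp ((n * x : ℝ) * Complex.I)‖ := Complex.re_le_norm _
    _ = _ := by rw [norm_mul, Complex.norm_exp_ofReal_mul_I, one_mul]

lemma one_div_sin_sq_le_norm_sum_range_exp_sq {N : ℕ} (hN : 1 ≤ N) {x : ℝ} (hx : |x| ≤ π / N) :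
    1 / sin (π / (2 * N)) ^ 2 ≤ ‖∑ n ∈ range N, Complex.exp ((n * x : ℝ) * Complex.I)‖ ^ 2 := by
  set t := π / (2 * N)
  have hN0 : (N : ℝ) ≠ 0 := by positivity
  have hNt : N * t = π / 2 := by simp only [t]; field_simp
  have hsin : 0 < sin t := sin_pos_of_pos_of_lt_pi (by positivity)
    (div_lt_self pi_pos (by norm_cast; omega))
  have hsum : ∑ n ∈ range N, cos ((2 * n + 1 - N) * t) = 1 / sin t := by
    rw [eq_div_iff hsin.ne', sum_range_cos_mul_sin, hNt, sin_pi_div_two]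
  have hxt : |x / 2| ≤ t := by
    rw [abs_div, abs_two, show t = π / N / 2 by rw [div_div, mul_comm]]
    gcongr
  rw [one_div, ← inv_pow, ← one_div]
  gcongr
  calc 1 / sin t = ∑ n ∈ range N, cos ((2 * n + 1 - N) * t) := hsum.symm
    _ ≤ ∑ n ∈ range N, cos ((2 * n + 1 - N) * (x / 2)) :=
        sum_range_cos_le_sum_range_cos N (by linarith [pi_pos]) hxt
    _ ≤ _ := sum_range_cos_le_norm_sum_range_exp N x

theorem stmt_9_general (N : ℕ) (hN : 1 ≤ N) (dbar : ℝ) (hd : 0 < dbar)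
    (Δmin Δmax : ℝ) (hspan : Δmax - Δmin ≤ 1 / (N * dbar))
    (θ : Fin N → ℝ)
    (hθ : ∀ n : Fin N, θ n = -(2 * Real.pi * n * dbar * (Δmin + 1 / (2 * N * dbar)))) :
    ∀ Δ ∈ Set.Icc Δmin Δmax,
      1 / Real.sin (Real.pi / (2 * N)) ^ 2 ≤
        ‖∑ n : Fin N, Complex.exp (Complex.I *
          ((θ n + 2 * Real.pi * n * dbar * Δ : ℝ) : ℂ))‖ ^ 2 := by
  rintro Δ ⟨hlo, hhi⟩
  have hN0 : (N : ℝ) ≠ 0 := by positivity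
  set x := π * (2 * (dbar * (Δ - Δmin)) - 1 / N) with hx_def
  have hphase (n : Fin N) : θ n + 2 * π * n * dbar * Δ = n * x := by
    rw [hθ n, hx_def]; field_simp; ring
  have hscaled : dbar * (Δ - Δmin) ≤ 1 / N :=
    calc dbar * (Δ - Δmin) ≤ dbar * (1 / (N * dbar)) := by gcongr; linarith
      _ = 1 / N := by field_simp
  have hx : |x| ≤ π / N := by
    have hnonneg : 0 ≤ dbar * (Δ - Δmin) := mul_nonneg hd.le (by linarith)
    rw [abs_mul, abs_of_pos pi_pos, ← mul_one_div π]
    exact mul_le_mul_of_nonneg_left (abs_le.mpr ⟨by linarith, by linarith⟩) pi_pos.le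
  simp only [hphase, mul_comm Complex.I, Fin.sum_univ_eq_sum_range (fun n : ℕ =>
    Complex.exp ((n * x : ℝ) * Complex.I))]
  exact one_div_sin_sq_le_norm_sum_range_exp_sq hN hx

/-- Main claim of Theorem 1: when the angular span has width at most
`1 / (N d̄)`, the static phase shifts centered on the span achieve worst-case
gain at least `1 / sin² (π / (2N))` over the whole span. -/
theorem stmt_9 (N : ℕ) (hN : 1 ≤ N) (dbar : ℝ) (hd : 0 < dbar)
    (Δmin Δmax : ℝ) (hΔ : Δmin ≤ Δmax) (hspan : Δmax - Δmin ≤ 1 / (N * dbar))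
    (θ : Fin N → ℝ)
    (hθ : ∀ n : Fin N, θ n = -(2 * Real.pi * n * dbar * (Δmin + 1 / (2 * N * dbar)))) :
    ∀ Δ ∈ Set.Icc Δmin Δmax,
      1 / Real.sin (Real.pi / (2 * N)) ^ 2 ≤
        ‖∑ n : Fin N, Complex.exp (Complex.I *
          ((θ n + 2 * Real.pi * n * dbar * Δ : ℝ) : ℂ))‖ ^ 2 :=
  stmt_9_general N hN dbar hd Δmin Δmax hspan θ hθ
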